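/- Let f ∈ L²₊(ℝ) (holomorphic in the upper half-plane) with f(conj(p)) = 0 for some p with Im(p) < 0 (i.e., conj(p) is in the upper half-plane). Then there exists f' ∈ L²₊(ℝ) such that f(x) = ((x - conj(p))/(x - p)) f'(x) and ‖f'‖_{L²} = ‖f‖_{L²}. -/

import Mathlib

open MeasureTheory Complex Filter

/-- An element of the Hardy space `L²₊(ℝ)` of the upper half-plane: an `L²` boundary
function together with a holomorphic extension to `ℂ₊` with uniformly `L²`-bounded
horizontal traces, of which the boundary function is the a.e. vertical limit. -/
structure HardyL2 where
  toFun : ℝ → ℂ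
  ext : ℂ → ℂ
  holo : DifferentiableOn ℂ ext {z : ℂ | 0 < z.im}
  bound : ∃ M : ℝ, ∀ y : ℝ, 0 < y → (∫ x : ℝ, ‖ext (x + y * Complex.I)‖ ^ 2) ≤ M
  boundary : ∀ᵐ x : ℝ, Tendsto (fun y : ℝ => ext (x + y * Complex.I))
    (nhdsWithin 0 (Set.Ioi 0)) (nhds (toFun x))
  memL2 : MeasureTheory.MemLp toFun 2


/-!
Dividing by the Blaschke factor `B z = (z - conj p) / (z - p)` means multiplying by
`(z - p) / (z - conj p)`; as `f` vanishes at `conj p` the quotient is again holomorphic on `ℂ₊`.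
On `ℝ` we have `‖B‖ = 1`, so boundary values keep their norms. For the uniform bound on the
horizontal traces: `‖B‖ ≤ 1` on `ℂ₊`, so each trace of `f / B` dominates that of `f` (and
makes it integrable when the trace of `f / B` is, so the bound on the Bochner integrals of `f`
applies); away from the disc of radius `-p.im / 2` about `conj p` we have `‖1 / B‖ ≤ 5`, and
on that disc `f / B` is bounded by compactness, while each horizontal line meets the disc in a
set of length at most `-p.im`.
-/

open ComplexConjugate Topology

theorem integral_le_mul_add_mul_measureReal {α : Type*} [MeasurableSpace α] {μ : Measure α}
    {u v : α → ℝ} {s : Set α} {c K M : ℝ}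
    (hv : AEStronglyMeasurable v μ) (hv_nonneg : ∀ x, 0 ≤ v x) (hvu : ∀ x, v x ≤ u x)
    (hc : 0 ≤ c) (hK : 0 ≤ K) (hs : MeasurableSet s) (hμs : μ s < ⊤)
    (h_out : ∀ x ∉ s, u x ≤ c * v x) (h_in : ∀ x ∈ s, u x ≤ K) (hM : ∫ x, v x ∂μ ≤ M) :
    ∫ x, u x ∂μ ≤ c * M + K * μ.real s := by
  have hM0 : 0 ≤ M := (integral_nonneg hv_nonneg).trans hM
  by_cases hu : Integrable u μ
  swap
  · rw [integral_undef hu]; positivity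
  have hv_int : Integrable v μ :=
    hu.mono' hv (ae_of_all _ fun x => (Real.norm_of_nonneg (hv_nonneg x)).trans_le (hvu x))
  have hind : Integrable (s.indicator fun _ => K) μ :=
    (integrable_indicator_iff hs).2 (integrableOn_const hμs.ne)
  calc ∫ x, u x ∂μ ≤ ∫ x, (c * v x + s.indicator (fun _ => K) x) ∂μ := by
        refine integral_mono_of_nonneg (ae_of_all _ fun x => (hv_nonneg x).trans (hvu x))
          ((hv_int.const_mul c).add hind) (ae_of_all _ fun x => ?_)
        by_cases hx : x ∈ s
        · simp only [Set.indicator_of_mem hx]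
          nlinarith [h_in x hx, hv_nonneg x]
        · simp only [Set.indicator_of_notMem hx, add_zero]
          exact h_out x hx
    _ = c * ∫ x, v x ∂μ + K * μ.real s := by
        rw [integral_add (hv_int.const_mul c) hind, integral_const_mul,
          integral_indicator_const K hs, smul_eq_mul, mul_comm K]
    _ ≤ c * M + K * μ.real s := by gcongr

namespace Complex

theorem norm_sub_conj_le_norm_sub {p z : ℂ} (hp : p.im ≤ 0) (hz : 0 ≤ z.im) :
    ‖z - conj p‖ ≤ ‖z - p‖ := by
  rw [norm_def, norm_def]
  refine Real.sqrt_le_sqrt ?_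
  simp only [normSq_apply, sub_re, sub_im, conj_re, conj_im]
  nlinarith [mul_nonneg hz (neg_nonneg.2 hp)]

theorem norm_sub_conj (p : ℂ) : ‖p - conj p‖ = 2 * |p.im| := by
  rw [sub_conj, norm_mul, norm_real, norm_I, Real.norm_eq_abs, abs_mul, mul_one, abs_two]

theorem conj_im_pos {p : ℂ} (hp : p.im < 0) : 0 < (conj p).im := by
  simpa using hp

theorem ofReal_sub_ne_zero {p : ℂ} (hp : p.im ≠ 0) (x : ℝ) : (x : ℂ) - p ≠ 0 := by
  intro h
  apply hp
  simpa using congrArg im h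

theorem norm_ofReal_sub_div_ofReal_sub_conj {p : ℂ} (hp : p.im ≠ 0) (x : ℝ) :
    ‖((x : ℂ) - p) / ((x : ℂ) - conj p)‖ = 1 := by
  have hconj : (x : ℂ) - conj p = conj ((x : ℂ) - p) := by simp
  rw [norm_div, hconj, norm_conj, div_self (norm_ne_zero_iff.2 (ofReal_sub_ne_zero hp x))]

theorem continuous_ofReal_sub_div_ofReal_sub {p w : ℂ} (hw : w.im ≠ 0) :
    Continuous fun x : ℝ => ((x : ℂ) - p) / ((x : ℂ) - w) :=
  (continuous_ofReal.sub continuous_const).div (continuous_ofReal.sub continuous_const)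
    (ofReal_sub_ne_zero hw)

theorem closedBall_subset_setOf_im_pos {w : ℂ} {r : ℝ} (hr : r < w.im) :
    Metric.closedBall w r ⊆ {z : ℂ | 0 < z.im} := by
  intro z hz
  have := (abs_im_le_norm (z - w)).trans (mem_closedBall_iff_norm.1 hz)
  rw [sub_im, abs_le] at this
  show 0 < z.im
  linarith

theorem volume_preimage_ball_le (y : ℝ) (w : ℂ) (r : ℝ) :
    volume ((fun x : ℝ => (x : ℂ) + y * I) ⁻¹' Metric.ball w r) ≤ ENNReal.ofReal (2 * r) := by
  rw [← Real.volume_ball w.re r]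
  refine measure_mono fun x hx => ?_
  rw [Set.mem_preimage, mem_ball_iff_norm] at hx
  rw [Metric.mem_ball, Real.dist_eq]
  simpa using (abs_re_le_norm _).trans_lt hx

theorem tendsto_ofReal_add_mul_I (x : ℝ) :
    Tendsto (fun y : ℝ => (x : ℂ) + y * I) (𝓝[>] 0) (𝓝 x) := by
  have : Continuous fun y : ℝ => (x : ℂ) + y * I := by fun_prop
  simpa using (this.tendsto 0).mono_left nhdsWithin_le_nhds

end Complex

namespace HardyL2

/-- `f.ext / B` for the Blaschke factor `B z = (z - conj p) / (z - p)`, provided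
`f.ext (conj p) = 0`; `dslope` fills in the removable singularity at `conj p`. -/
noncomputable def divBlaschkeExt (f : HardyL2) (p : ℂ) (z : ℂ) : ℂ :=
  dslope f.ext (conj p) z * (z - p)

variable {f : HardyL2} {p : ℂ}

theorem divBlaschkeExt_of_ne (h0 : f.ext (conj p) = 0) {z : ℂ} (hz : z ≠ conj p) :
    f.divBlaschkeExt p z = f.ext z * ((z - p) / (z - conj p)) := by
  have : z - conj p ≠ 0 := sub_ne_zero.2 hz
  rw [divBlaschkeExt, dslope_of_ne _ hz, slope_def_field, h0, sub_zero]
  field_simp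

theorem differentiableOn_divBlaschkeExt (hp : p.im < 0) :
    DifferentiableOn ℂ (f.divBlaschkeExt p) {z : ℂ | 0 < z.im} := by
  have hU : {z : ℂ | 0 < z.im} ∈ 𝓝 (conj p) :=
    (isOpen_lt continuous_const continuous_im).mem_nhds (conj_im_pos hp)
  exact ((differentiableOn_dslope hU).2 f.holo).mul (differentiableOn_id.sub_const p)

theorem norm_ext_le_norm_divBlaschkeExt (hp : p.im ≤ 0) (h0 : f.ext (conj p) = 0) {z : ℂ}
    (hz : 0 ≤ z.im) : ‖f.ext z‖ ≤ ‖f.divBlaschkeExt p z‖ := by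
  rcases eq_or_ne z (conj p) with rfl | hne
  · simp [h0]
  rw [divBlaschkeExt_of_ne h0 hne, norm_mul, norm_div]
  have hpos : 0 < ‖z - conj p‖ := norm_pos_iff.2 (sub_ne_zero.2 hne)
  exact le_mul_of_one_le_right (norm_nonneg _)
    ((one_le_div hpos).2 (norm_sub_conj_le_norm_sub hp hz))

theorem norm_divBlaschkeExt_le_five_mul (hp : p.im < 0) (h0 : f.ext (conj p) = 0) {z : ℂ}
    (hz : -p.im / 2 ≤ ‖z - conj p‖) : ‖f.divBlaschkeExt p z‖ ≤ 5 * ‖f.ext z‖ := by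
  have hpos : 0 < ‖z - conj p‖ := lt_of_lt_of_le (by linarith) hz
  rw [divBlaschkeExt_of_ne h0 (sub_ne_zero.1 (norm_pos_iff.1 hpos)), norm_mul, norm_div,
    mul_comm 5]
  gcongr
  rw [div_le_iff₀ hpos]
  calc ‖z - p‖ ≤ ‖z - conj p‖ + ‖conj p - p‖ := norm_sub_le_norm_sub_add_norm_sub _ _ _
    _ = ‖z - conj p‖ + 2 * -p.im := by
        rw [norm_sub_rev (conj p) p, norm_sub_conj, abs_of_neg hp]
    _ ≤ 5 * ‖z - conj p‖ := by linarith

theorem exists_bound_divBlaschkeExt_closedBall (hp : p.im < 0) :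
    ∃ K, ∀ z ∈ Metric.closedBall (conj p) (-p.im / 2), ‖f.divBlaschkeExt p z‖ ≤ K :=
  (isCompact_closedBall _ _).exists_bound_of_continuousOn
    ((differentiableOn_divBlaschkeExt hp).continuousOn.mono
      (closedBall_subset_setOf_im_pos (by linarith [conj_im_pos hp, conj_im p])))

theorem exists_integral_norm_divBlaschkeExt_sq_le (hp : p.im < 0) (h0 : f.ext (conj p) = 0) :
    ∃ M : ℝ, ∀ y : ℝ, 0 < y → ∫ x : ℝ, ‖f.divBlaschkeExt p (x + y * I)‖ ^ 2 ≤ M := by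
  obtain ⟨M, hM⟩ := f.bound
  obtain ⟨K, hK⟩ := exists_bound_divBlaschkeExt_closedBall (f := f) hp
  have hK0 : 0 ≤ K := (norm_nonneg _).trans (hK _ (Metric.mem_closedBall_self (by linarith)))
  refine ⟨25 * M + K ^ 2 * -p.im, fun y hy => ?_⟩
  set s := (fun x : ℝ => (x : ℂ) + y * I) ⁻¹' Metric.ball (conj p) (-p.im / 2)
  have hline : Continuous fun x : ℝ => (x : ℂ) + y * I := by fun_prop
  have hline_im : ∀ x : ℝ, 0 < ((x : ℂ) + y * I).im := by simpa using hy
  have hf_line : Continuous fun x : ℝ => f.ext (x + y * I) :=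
    f.holo.continuousOn.comp_continuous hline hline_im
  have hμs : volume s ≤ ENNReal.ofReal (-p.im) := by
    simpa [mul_div_cancel₀] using volume_preimage_ball_le y (conj p) (-p.im / 2)
  calc ∫ x : ℝ, ‖f.divBlaschkeExt p (x + y * I)‖ ^ 2
      ≤ 25 * M + K ^ 2 * volume.real s :=
        integral_le_mul_add_mul_measureReal (c := 25)
          (u := fun x : ℝ => ‖f.divBlaschkeExt p (x + y * I)‖ ^ 2)
          (v := fun x : ℝ => ‖f.ext (x + y * I)‖ ^ 2)
          (hf_line.norm.pow 2).aestronglyMeasurable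
          (fun x => by positivity)
          (fun x => pow_le_pow_left₀ (norm_nonneg _)
            (norm_ext_le_norm_divBlaschkeExt hp.le h0 (hline_im x).le) 2)
          (by norm_num) (sq_nonneg K) (Metric.isOpen_ball.preimage hline).measurableSet
          (hμs.trans_lt ENNReal.ofReal_lt_top)
          (fun x hx => by
            have hfar := norm_divBlaschkeExt_le_five_mul hp h0
              (not_lt.1 (by simpa [s, Metric.mem_ball, dist_eq_norm] using hx))
            nlinarith [norm_nonneg (f.divBlaschkeExt p (x + y * I))])
          (fun x hx => pow_le_pow_left₀ (norm_nonneg _)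
            (hK _ (Metric.ball_subset_closedBall hx)) 2)
          (hM y hy)
    _ ≤ 25 * M + K ^ 2 * -p.im := by
        gcongr
        exact ENNReal.toReal_le_of_le_ofReal (by linarith) hμs

theorem tendsto_divBlaschkeExt (hp : p.im < 0) (h0 : f.ext (conj p) = 0) {x : ℝ}
    (hx : Tendsto (fun y : ℝ => f.ext (x + y * I)) (𝓝[>] 0) (𝓝 (f.toFun x))) :
    Tendsto (fun y : ℝ => f.divBlaschkeExt p (x + y * I)) (𝓝[>] 0)
      (𝓝 (f.toFun x * (((x : ℂ) - p) / ((x : ℂ) - conj p)))) := by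
  have hfactor := ((tendsto_ofReal_add_mul_I x).sub_const p).div
    ((tendsto_ofReal_add_mul_I x).sub_const (conj p))
    (ofReal_sub_ne_zero (conj_im_pos hp).ne' x)
  refine (hx.mul hfactor).congr' ?_
  filter_upwards [Ioo_mem_nhdsGT (show (0 : ℝ) < -p.im by linarith)] with y hy
  refine (divBlaschkeExt_of_ne h0 fun h => ?_).symm
  have := congrArg im h
  simp only [add_im, ofReal_im, mul_im, ofReal_re, I_im, I_re, conj_im] at this
  linarith [hy.2]

variable (f) in
noncomputable def divBlaschke (hp : p.im < 0) (h0 : f.ext (conj p) = 0) : HardyL2 where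
  toFun x := f.toFun x * (((x : ℂ) - p) / ((x : ℂ) - conj p))
  ext := f.divBlaschkeExt p
  holo := differentiableOn_divBlaschkeExt hp
  bound := exists_integral_norm_divBlaschkeExt_sq_le hp h0
  boundary := f.boundary.mono fun _ hx => tendsto_divBlaschkeExt hp h0 hx
  memL2 := f.memL2.congr_norm
    (f.memL2.1.mul
      (continuous_ofReal_sub_div_ofReal_sub (conj_im_pos hp).ne').aestronglyMeasurable)
    (ae_of_all _ fun x => by rw [norm_mul, norm_ofReal_sub_div_ofReal_sub_conj hp.ne x, mul_one])

theorem norm_divBlaschke_toFun (hp : p.im < 0) (h0 : f.ext (conj p) = 0) (x : ℝ) :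
    ‖(f.divBlaschke hp h0).toFun x‖ = ‖f.toFun x‖ := by
  rw [divBlaschke, norm_mul, norm_ofReal_sub_div_ofReal_sub_conj hp.ne x, mul_one]

theorem toFun_eq_blaschke_mul_divBlaschke (hp : p.im < 0) (h0 : f.ext (conj p) = 0) (x : ℝ) :
    f.toFun x = (((x : ℂ) - conj p) / ((x : ℂ) - p)) * (f.divBlaschke hp h0).toFun x := by
  have hxp := ofReal_sub_ne_zero hp.ne x
  have hxq := ofReal_sub_ne_zero (conj_im_pos hp).ne' x
  simp only [divBlaschke]
  field_simp

end HardyL2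

/-- **Division of a Hardy function by a Blaschke factor.**  If `f ∈ L²₊(ℝ)` and its
holomorphic extension vanishes at the interior point `conj p ∈ ℂ₊` (`Im p < 0`), then
`f(x) = ((x - conj p)/(x - p)) f'(x)` for some `f' ∈ L²₊(ℝ)` with the same `L²` norm. -/
theorem stmt_10 (p : ℂ) (hp : p.im < 0) (f : HardyL2)
    (h0 : f.ext ((starRingEnd ℂ) p) = 0) :
    ∃ f' : HardyL2,
      (∀ᵐ x : ℝ, f.toFun x = (((x : ℂ) - (starRingEnd ℂ) p) / ((x : ℂ) - p)) * f'.toFun x) ∧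
      eLpNorm f'.toFun 2 volume = eLpNorm f.toFun 2 volume :=
  ⟨f.divBlaschke hp h0, ae_of_all _ (HardyL2.toFun_eq_blaschke_mul_divBlaschke hp h0),
    eLpNorm_congr_norm_ae (ae_of_all _ (HardyL2.norm_divBlaschke_toFun hp h0))⟩
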